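/- arXiv:2109.14604 — 2 statements merged into one kernel-verified Lean document; each statement's English description precedes it below -/
import Mathlib

section
/- If n = 3f+1 and a block b was voted for by at least 2f+1 nodes (of which at least f+1 are honest), then in any set S of 2f+1 nodes responding to a payload-retrieval request, at least one honest responder possesses the payload of b. -/
/-!
Quorum intersection: `V` and `S` lie in `N`, so `|V ∩ S| ≥ |V| + |S| - |N| ≥ f + 1 > |B|`.
Hence some responder in `V ∩ S` is honest, and as an honest voter it stores the payload.
-/

namespace Finset

variable {α : Type*} [DecidableEq α] {s t u : Finset α}

theorem card_add_card_le_card_inter_add_card (hs : s ⊆ u) (ht : t ⊆ u) :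
    #s + #t ≤ #(s ∩ t) + #u := by
  rw [← card_inter_add_card_union]
  exact Nat.add_le_add_left (card_le_card (union_subset hs ht)) _

end Finset

theorem payload_retrieval_general {α : Type*} [DecidableEq α] (f : ℕ)
    (N B V S : Finset α)
    (hN : N.card = 3 * f + 1)
    (hBcard : B.card ≤ f)
    (hasPayload : α → Prop)
    (hV : V ⊆ N) (hVcard : 2 * f + 1 ≤ V.card)
    (hstore : ∀ i ∈ V, i ∉ B → hasPayload i)
    (hS : S ⊆ N) (hScard : S.card = 2 * f + 1) :
    ∃ i ∈ S, i ∉ B ∧ hasPayload i := by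
  have hquorum : B.card < (V ∩ S).card := by
    have := Finset.card_add_card_le_card_inter_add_card hV hS
    omega
  obtain ⟨i, hiVS, hiB⟩ := Finset.exists_mem_notMem_of_card_lt_card hquorum
  obtain ⟨hiV, hiS⟩ := Finset.mem_inter.mp hiVS
  exact ⟨i, hiS, hiB, hstore i hiV hiB⟩

/-- If block b was voted for by at least 2f+1 nodes (honest voters store b's
payload), then any set of 2f+1 responders to a payload-retrieval request
contains an honest responder possessing b's payload. -/
theorem payload_retrieval {α : Type*} [DecidableEq α] (f : ℕ)
    (N B V S : Finset α)
    (hN : N.card = 3 * f + 1)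
    (hB : B ⊆ N) (hBcard : B.card ≤ f)
    (hasPayload : α → Prop)
    (hV : V ⊆ N) (hVcard : 2 * f + 1 ≤ V.card)
    (hstore : ∀ i ∈ V, i ∉ B → hasPayload i)
    (hS : S ⊆ N) (hScard : S.card = 2 * f + 1) :
    ∃ i ∈ S, i ∉ B ∧ hasPayload i :=
  payload_retrieval_general f N B V S hN hBcard hasPayload hV hVcard hstore hS hScard
end

section
/- If n = 3f+1, a block b is committed by at least f+1 honest nodes, and a conflicting block b' at the same sequence receives votes from a set of at least 2f+1 nodes, then some honest node voted for both b and b', a contradiction; hence a block committed by at least f+1 honest nodes can never be revoked in favor of a conflicting block. -/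
namespace Finset

variable {α : Type*} [DecidableEq α] {N B V V' : Finset α}

theorem card_add_card_le_card_add_card_inter (hV : V ⊆ N) (hV' : V' ⊆ N) :
    #V + #V' ≤ #N + #(V ∩ V') := by
  rw [← card_union_add_card_inter]
  gcongr
  exact union_subset hV hV'

theorem exists_mem_inter_notMem_of_card_add_card_lt (hV : V ⊆ N) (hV' : V' ⊆ N)
    (h : #N + #B < #V + #V') : ∃ i ∈ V ∩ V', i ∉ B :=
  exists_mem_notMem_of_card_lt_card <| by
    have := card_add_card_le_card_add_card_inter hV hV'
    omega

end Finset

theorem committed_block_irrevocable_general {α β : Type*} [DecidableEq α] (f : ℕ)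
    (N B : Finset α)
    (hN : N.card = 3 * f + 1)
    (hBcard : B.card ≤ f)
    (voted : α → ℕ → β → Prop)
    (honest_single_vote : ∀ i ∈ N, i ∉ B → ∀ s b b', voted i s b → voted i s b' → b = b')
    (s : ℕ) (b b' : β) (hne : b ≠ b')
    (V V' : Finset α) (hVN : V ⊆ N) (hV'N : V' ⊆ N)
    (hV : ∀ i ∈ V, voted i s b) (hV' : ∀ i ∈ V', voted i s b')
    (hVcard : 2 * f + 1 ≤ V.card) (hV'card : 2 * f + 1 ≤ V'.card) :
    False := by
  obtain ⟨i, hi, hiB⟩ := Finset.exists_mem_inter_notMem_of_card_add_card_lt hVN hV'N (B := B)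
    (by omega)
  rw [Finset.mem_inter] at hi
  exact hne (honest_single_vote i (hVN hi.1) hiB s b b' (hV i hi.1) (hV' i hi.2))

/-- A block committed by at least f+1 honest nodes can never be revoked in
favor of a conflicting block: if a conflicting block b' at the same sequence
also gathers 2f+1 votes, some honest node would have voted for both, which is
impossible. -/
theorem committed_block_irrevocable {α β : Type*} [DecidableEq α] (f : ℕ)
    (N B : Finset α)
    (hN : N.card = 3 * f + 1)
    (hB : B ⊆ N) (hBcard : B.card ≤ f)
    (voted : α → ℕ → β → Prop)
    (honest_single_vote : ∀ i ∈ N, i ∉ B → ∀ s b b', voted i s b → voted i s b' → b = b')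
    (s : ℕ) (b b' : β) (hne : b ≠ b')
    (V V' : Finset α) (hVN : V ⊆ N) (hV'N : V' ⊆ N)
    (hV : ∀ i ∈ V, voted i s b) (hV' : ∀ i ∈ V', voted i s b')
    (hVcard : 2 * f + 1 ≤ V.card) (hV'card : 2 * f + 1 ≤ V'.card) :
    False :=
  committed_block_irrevocable_general f N B hN hBcard voted honest_single_vote s b b' hne V V' hVN
    hV'N hV hV' hVcard hV'card
end
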